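/- Under the same hypotheses (f proper lsc convex, g differentiable with L-Lipschitz gradient, F = f + g bounded below, 0 < τ < 1/L), the quantity γ_k = min_{0 ≤ i ≤ k} ‖x_{i+1} − x_i‖² for the proximal gradient iterates satisfies γ_k ≤ (1/(k+1)) · (F(x_0) − lim_n F(x_n)) / (1/(2τ) − L/2), i.e. the squared residual has O(1/k) convergence rate. -/

import Mathlib

open Filter Topology

local notation "⟪" a ", " b "⟫" => @inner ℝ _ _ a b

lemma descent_lemma {n : ℕ} (g : EuclideanSpace ℝ (Fin n) → ℝ)
    (g' : EuclideanSpace ℝ (Fin n) → EuclideanSpace ℝ (Fin n)) (L : ℝ)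
    (hg : ∀ x, HasGradientAt g (g' x) x)
    (hgL : ∀ x y, ‖g' x - g' y‖ ≤ L * ‖x - y‖)
    (a b : EuclideanSpace ℝ (Fin n)) :
    g b ≤ g a + ⟪g' a, b - a⟫ + L / 2 * ‖b - a‖ ^ 2 := by
  set v := b - a with hv
  set ψ : ℝ → ℝ := fun t => g (a + t • v) - t * ⟪g' a, v⟫ - L * t ^ 2 / 2 * ‖v‖ ^ 2 with hψdef
  have hc : ∀ t : ℝ, HasDerivAt (fun t : ℝ => a + t • v) v t := by
    intro t
    simpa using ((hasDerivAt_id t).smul_const v).const_add a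
  have hψ : ∀ t : ℝ, HasDerivAt ψ
      (⟪g' (a + t • v), v⟫ - ⟪g' a, v⟫ - L * t * ‖v‖ ^ 2) t := by
    intro t
    have h1 : HasDerivAt (fun t : ℝ => g (a + t • v)) ⟪g' (a + t • v), v⟫ t := by
      have := (hg (a + t • v)).hasFDerivAt.comp_hasDerivAt t (hc t)
      simpa [InnerProductSpace.toDual_apply_apply, Function.comp_def] using this
    have h2 : HasDerivAt (fun t : ℝ => t * ⟪g' a, v⟫) ⟪g' a, v⟫ t := by
      simpa using (hasDerivAt_id t).mul_const (⟪g' a, v⟫)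
    have h3 : HasDerivAt (fun t : ℝ => L * t ^ 2 / 2 * ‖v‖ ^ 2)
        (L * t * ‖v‖ ^ 2) t := by
      have h := (hasDerivAt_pow 2 t).const_mul (L / 2 * ‖v‖ ^ 2)
      have heq : (fun t : ℝ => L / 2 * ‖v‖ ^ 2 * t ^ 2)
          = fun t : ℝ => L * t ^ 2 / 2 * ‖v‖ ^ 2 := by ext s; ring
      rw [heq] at h
      exact h.congr_deriv (by push_cast; norm_num; ring)
    exact (h1.sub h2).sub h3
  have hcont : Continuous ψ := by
    have : Differentiable ℝ ψ := fun t => (hψ t).differentiableAt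
    exact this.continuous
  have hanti : AntitoneOn ψ (Set.Icc (0:ℝ) 1) := by
    apply antitoneOn_of_deriv_nonpos (convex_Icc 0 1) (hcont.continuousOn)
    · intro t ht
      exact (hψ t).differentiableAt.differentiableWithinAt
    · intro t ht
      rw [interior_Icc] at ht
      rw [(hψ t).deriv]
      have hinner : ⟪g' (a + t • v), v⟫ - ⟪g' a, v⟫ ≤ L * t * ‖v‖ ^ 2 := by
        have h1 : ⟪g' (a + t • v) - g' a, v⟫ ≤ ‖g' (a + t • v) - g' a‖ * ‖v‖ :=
          real_inner_le_norm _ _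
        have h2 : ‖g' (a + t • v) - g' a‖ ≤ L * ‖(a + t • v) - a‖ := hgL _ _
        have h3 : ‖(a + t • v) - a‖ = t * ‖v‖ := by
          simp [norm_smul, abs_of_nonneg ht.1.le]
        rw [inner_sub_left] at h1
        rw [h3] at h2
        nlinarith [mul_le_mul_of_nonneg_right h2 (norm_nonneg v)]
      linarith
  have h01 := hanti (Set.left_mem_Icc.mpr zero_le_one) (Set.right_mem_Icc.mpr zero_le_one) zero_le_one
  simp only [hψdef] at h01
  have e0 : a + (0:ℝ) • v = a := by simp
  have e1 : a + (1:ℝ) • v = b := by simp [hv]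
  rw [e0, e1] at h01
  ring_nf at h01 ⊢
  linarith

/-- `O(1/k)` convergence rate of the minimal squared residual of the proximal gradient
iterates: `min_{0 ≤ i ≤ k} ‖x_{i+1} − x_i‖² ≤ (1/(k+1)) (F(x_0) − lim F(x_k))/(1/(2τ) − L/2)`. -/
theorem stmt_6 {n : ℕ}
    (f g : EuclideanSpace ℝ (Fin n) → ℝ)
    (g' : EuclideanSpace ℝ (Fin n) → EuclideanSpace ℝ (Fin n)) (L τ : ℝ)
    (hf_lsc : LowerSemicontinuous f) (hf_conv : ConvexOn ℝ Set.univ f)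
    (hg : ∀ x, HasGradientAt g (g' x) x)
    (hgL : ∀ x y, ‖g' x - g' y‖ ≤ L * ‖x - y‖)
    (hbdd : ∃ m : ℝ, ∀ x, m ≤ f x + g x)
    (hL : 0 < L) (hτ : 0 < τ) (hτL : τ < 1 / L)
    (P : EuclideanSpace ℝ (Fin n) → EuclideanSpace ℝ (Fin n))
    (hP : ∀ x z, (1 / 2) * ‖x - P x‖ ^ 2 + τ * f (P x) ≤ (1 / 2) * ‖x - z‖ ^ 2 + τ * f z)
    (x : ℕ → EuclideanSpace ℝ (Fin n))
    (hx : ∀ k, x (k + 1) = P (x k - τ • g' (x k)))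
    (l : ℝ) (hlim : Tendsto (fun k => f (x k) + g (x k)) atTop (𝓝 l)) :
    ∀ k : ℕ, (⨅ i : Fin (k + 1), ‖x ((i : ℕ) + 1) - x (i : ℕ)‖ ^ 2) ≤
      (1 / ((k : ℝ) + 1)) * (((f (x 0) + g (x 0)) - l) / (1 / (2 * τ) - L / 2)) := by
  set F : ℕ → ℝ := fun k => f (x k) + g (x k) with hF
  have hc0 : 0 < 1 / (2 * τ) - L / 2 := by
    have h1 : τ * L < 1 := (lt_div_iff₀ hL).mp hτL
    have h2 : L / 2 < 1 / (2 * τ) := by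
      rw [div_lt_div_iff₀ (by norm_num) (by positivity)]
      nlinarith
    linarith
  -- sufficient decrease
  have hdec : ∀ k : ℕ, F (k + 1) + (1 / (2 * τ) - L / 2) * ‖x (k + 1) - x k‖ ^ 2 ≤ F k := by
    intro k
    set y := x k with hy
    set w := g' y with hw
    set d := y - x (k + 1) with hd
    have hprox := hP (y - τ • w) y
    rw [← hx k] at hprox
    have e1 : (y - τ • w) - x (k + 1) = d - τ • w := by rw [hd]; abel
    have e2 : (y - τ • w) - y = -(τ • w) := by abel
    rw [e1, e2] at hprox
    have e3 : ‖d - τ • w‖ ^ 2 = ‖d‖ ^ 2 - 2 * (τ * ⟪d, w⟫) + ‖τ • w‖ ^ 2 := by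
      rw [norm_sub_sq_real, real_inner_smul_right]
    have e4 : ‖-(τ • w)‖ ^ 2 = ‖τ • w‖ ^ 2 := by rw [norm_neg]
    rw [e3, e4] at hprox
    -- f (x (k+1)) bound
    have hfb : τ * f (x (k + 1)) ≤ τ * f y + τ * ⟪d, w⟫ - (1/2) * ‖d‖ ^ 2 := by linarith
    have hgb := descent_lemma g g' L hg hgL y (x (k + 1))
    have e5 : ⟪g' y, x (k + 1) - y⟫ = -⟪d, w⟫ := by
      rw [hd, hw]
      rw [show x (k + 1) - y = -(y - x (k + 1)) by abel, inner_neg_right, real_inner_comm]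
    have e6 : ‖x (k + 1) - y‖ = ‖d‖ := by rw [hd, norm_sub_rev]
    rw [e5, e6] at hgb
    have hfb2 : f (x (k + 1)) ≤ f y + ⟪d, w⟫ - (1 / (2 * τ)) * ‖d‖ ^ 2 := by
      have hrw : τ * (1 / (2 * τ) * ‖d‖ ^ 2) = 1 / 2 * ‖d‖ ^ 2 := by
        field_simp
      have key : τ * f (x (k + 1)) ≤ τ * (f y + ⟪d, w⟫ - 1 / (2 * τ) * ‖d‖ ^ 2) := by
        rw [mul_sub, mul_add, hrw]
        linarith
      exact le_of_mul_le_mul_left key hτ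
    have : F (k + 1) ≤ F k - (1 / (2 * τ) - L / 2) * ‖d‖ ^ 2 := by
      simp only [hF]
      have e6' : ‖x (k + 1) - x k‖ = ‖d‖ := by rw [hd, norm_sub_rev, hy]
      nlinarith [hfb2, hgb]
    have e6' : ‖x (k + 1) - x k‖ = ‖d‖ := by rw [hd, norm_sub_rev, hy]
    rw [e6']
    linarith
  have hanti : Antitone F := by
    apply antitone_nat_of_succ_le
    intro m
    have h1 := hdec m
    have h2 : 0 ≤ (1 / (2 * τ) - L / 2) * ‖x (m + 1) - x m‖ ^ 2 :=
      mul_nonneg hc0.le (sq_nonneg _)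
    calc F (m + 1) ≤ F (m + 1) + (1 / (2 * τ) - L / 2) * ‖x (m + 1) - x m‖ ^ 2 :=
          le_add_of_nonneg_right h2
      _ ≤ F m := h1
  have hlF : ∀ m, l ≤ F m := by
    intro m
    apply le_of_tendsto hlim
    filter_upwards [eventually_ge_atTop m] with j hj
    exact hanti hj
  intro k
  set γ := ⨅ i : Fin (k + 1), ‖x ((i : ℕ) + 1) - x (i : ℕ)‖ ^ 2 with hγ
  have hγle : ∀ i : Fin (k + 1), γ ≤ ‖x ((i : ℕ) + 1) - x (i : ℕ)‖ ^ 2 := fun i =>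
    ciInf_le (Set.Finite.bddBelow (Set.finite_range _)) i
  have hsum : (k + 1 : ℝ) * ((1 / (2 * τ) - L / 2) * γ) ≤ F 0 - l := by
    have htel : ∑ i ∈ Finset.range (k + 1), (F i - F (i + 1)) = F 0 - F (k + 1) := by
      rw [Finset.sum_range_sub' F]
    have hterm : ∀ i ∈ Finset.range (k + 1),
        (1 / (2 * τ) - L / 2) * γ ≤ F i - F (i + 1) := by
      intro i hi
      have hi' : i < k + 1 := Finset.mem_range.mp hi
      have := hγle ⟨i, hi'⟩
      have h := hdec i
      nlinarith [hc0]
    calc (k + 1 : ℝ) * ((1 / (2 * τ) - L / 2) * γ)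
        = ∑ _i ∈ Finset.range (k + 1), (1 / (2 * τ) - L / 2) * γ := by
          rw [Finset.sum_const, Finset.card_range]; push_cast; ring
      _ ≤ ∑ i ∈ Finset.range (k + 1), (F i - F (i + 1)) := Finset.sum_le_sum hterm
      _ = F 0 - F (k + 1) := htel
      _ ≤ F 0 - l := by linarith [hlF (k + 1)]
  have hk1 : (0:ℝ) < (k:ℝ) + 1 := by positivity
  show γ ≤ 1 / ((k:ℝ) + 1) * ((F 0 - l) / (1 / (2 * τ) - L / 2))
  have : γ ≤ (F 0 - l) / (((k:ℝ) + 1) * (1 / (2 * τ) - L / 2)) := by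
    rw [le_div_iff₀ (by positivity)]
    nlinarith [hsum]
  calc γ ≤ (F 0 - l) / (((k:ℝ) + 1) * (1 / (2 * τ) - L / 2)) := this
    _ = (1 / ((k : ℝ) + 1)) * ((F 0 - l) / (1 / (2 * τ) - L / 2)) := by
        field_simp
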